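/- arXiv:1108.4619 — 2 statements merged into one kernel-verified Lean document; each statement's English description precedes it below -/
import Mathlib

section
/- Let O be the ring of integers of an imaginary quadratic field F, let n be a nonzero ideal of O, and let p be a rational prime coprime to n. Then the reduction-mod-p map from Γ₁(n) = { M ∈ SL₂(O) : M ≡ (1 *; 0 1) mod n } to SL₂(O/pO) is surjective. -/
/-!
Since `O ⧸ pn ≃ O ⧸ p × O ⧸ n` by the Chinese remainder theorem, it suffices to lift `(y, 1)`
along `SL₂(O) → SL₂(O ⧸ pn)`, and reduction `SL₂(R) → SL₂(R ⧸ J)` is surjective for every ideal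
`J` of a Dedekind domain `R`. To see this, lift the bottom row of `y` to a coprime pair `(c, d)`:
take `d ≠ 0` and choose `c` by the Chinese remainder theorem to be `1` modulo the finitely many
maximal ideals that contain `d` but not `J`. Complete `(c, d)` to some `g ∈ SL₂(R)`; then
`y = (1 s; 0 1) · ḡ`, and the unipotent factor lifts.
-/

open NumberField Matrix MatrixGroups

namespace Ideal

variable {R : Type*} [CommRing R]

theorem exists_sub_mem_and_sub_mem {I J : Ideal R} (h : IsCoprime I J) (a b : R) :
    ∃ x, x - a ∈ I ∧ x - b ∈ J := by
  obtain ⟨i, hi, j, hj, hij⟩ := isCoprime_iff_exists.mp h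
  refine ⟨a * j + b * i, ?_, ?_⟩
  · rw [show a * j + b * i - a = (b - a) * i by linear_combination a * hij]
    exact mul_mem_left _ _ hi
  · rw [show a * j + b * i - b = (a - b) * j by linear_combination b * hij]
    exact mul_mem_left _ _ hj

theorem finite_setOf_isMaximal_mem [IsDedekindDomain R] {d : R} (hd : d ≠ 0) :
    {q : Ideal R | q.IsMaximal ∧ d ∈ q}.Finite := by
  have hne : span {d} ≠ 0 := by simpa [span_singleton_eq_bot] using hd
  have := UniqueFactorizationMonoid.fintypeSubtypeDvd _ hne
  refine (Set.finite_coe_iff.mp (Finite.of_fintype {q // q ∣ span {d}})).subset fun q hq => ?_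
  exact dvd_iff_le.mpr ((span_singleton_le_iff_mem q).mpr hq.2)

theorem Quotient.exists_ne_zero_mk_eq {J : Ideal R} (hJ : J ≠ ⊥) (x : R ⧸ J) :
    ∃ y ≠ 0, Quotient.mk J y = x := by
  obtain ⟨y, rfl⟩ := Quotient.mk_surjective x
  by_cases hy : y = 0
  · obtain ⟨j, hj, hj0⟩ := Submodule.exists_mem_ne_zero_of_ne_bot hJ
    exact ⟨j, hj0, by rw [hy, map_zero, Quotient.eq_zero_iff_mem]; exact hj⟩
  · exact ⟨y, hy, rfl⟩

theorem Quotient.exists_isCoprime_mk_eq [IsDedekindDomain R] {J : Ideal R} {c₀ d₀ : R ⧸ J}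
    (h : IsCoprime c₀ d₀) : ∃ c d : R, mk J c = c₀ ∧ mk J d = d₀ ∧ IsCoprime c d := by
  obtain ⟨c, rfl⟩ := mk_surjective c₀
  rcases eq_or_ne J ⊥ with rfl | hJ
  · obtain ⟨d, rfl⟩ := mk_surjective d₀
    exact ⟨c, d, rfl, rfl, by simpa using h.map (RingEquiv.quotientBot R).toRingHom⟩
  obtain ⟨d, hd, rfl⟩ := exists_ne_zero_mk_eq hJ d₀
  have hT := (finite_setOf_isMaximal_mem hd).subset
    (t := {q : Ideal R | q.IsMaximal ∧ d ∈ q ∧ ¬ J ≤ q}) fun q hq => ⟨hq.1, hq.2.1⟩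
  set Q := ∏ r ∈ hT.toFinset, r
  have hJQ : IsCoprime J Q := by
    refine IsCoprime.prod_right fun r hr => ?_
    rw [Set.Finite.mem_toFinset] at hr
    rw [isCoprime_iff_sup_eq]
    exact hr.1.1.2 _ (right_lt_sup.mpr hr.2.2)
  obtain ⟨c', hc', hc'Q⟩ := exists_sub_mem_and_sub_mem hJQ c 1
  refine ⟨c', d, mk_eq_mk_iff_sub_mem _ _ |>.mpr hc', rfl, ?_⟩
  rw [← isCoprime_span_singleton_iff, isCoprime_iff_sup_eq]
  by_contra hne
  obtain ⟨q, hq, hle⟩ := exists_le_maximal _ hne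
  have hc'q : c' ∈ q := hle (mem_sup_left (mem_span_singleton_self _))
  have hdq : d ∈ q := hle (mem_sup_right (mem_span_singleton_self _))
  by_cases hJq : J ≤ q
  · have hcq : c ∈ q := by simpa using q.sub_mem hc'q (hJq hc')
    have : Nontrivial (R ⧸ q) := Quotient.nontrivial_iff.mpr hq.ne_top
    have h0 : IsCoprime (0 : R ⧸ q) 0 := by
      simpa [Quotient.eq_zero_iff_mem.mpr hcq, Quotient.eq_zero_iff_mem.mpr hdq] using
        h.map (factor hJq)
    exact not_isUnit_zero (isCoprime_zero_left.mp h0)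
  · have hQq : Q ≤ q :=
      le_of_dvd (Finset.dvd_prod_of_mem _ (by simpa using ⟨hq, hdq, hJq⟩))
    exact hq.ne_top ((eq_top_iff_one q).mpr (by simpa using q.sub_mem hc'q (hQq hc'Q)))

end Ideal

namespace Matrix.SpecialLinearGroup

variable {S : Type*} [CommRing S]

def upperUnitriangular (s : S) : SL(2, S) :=
  ⟨!![1, s; 0, 1], by simp [det_fin_two_of]⟩

@[simp]
theorem coe_upperUnitriangular (s : S) :
    (upperUnitriangular s : Matrix (Fin 2) (Fin 2) S) = !![1, s; 0, 1] :=
  rfl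

@[simp]
theorem map_upperUnitriangular {T : Type*} [CommRing T] (f : S →+* T) (s : S) :
    map f (upperUnitriangular s) = upperUnitriangular (f s) := by
  ext i j; fin_cases i <;> fin_cases j <;> simp [map_apply_coe]

theorem exists_eq_upperUnitriangular_mul {y g : SL(2, S)} (h₀ : y 1 0 = g 1 0)
    (h₁ : y 1 1 = g 1 1) : ∃ s, y = upperUnitriangular s * g := by
  have hy := y.det_coe
  have hg := g.det_coe
  rw [det_fin_two, h₀, h₁] at hy
  rw [det_fin_two] at hg
  -- the top right entry of `y * g⁻¹`
  refine ⟨y 0 1 * g 0 0 - y 0 0 * g 0 1, ?_⟩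
  ext i j
  fin_cases i <;> fin_cases j <;> simp [Matrix.mul_apply, h₀, h₁]
  · linear_combination g 0 0 * hy - y 0 0 * hg
  · linear_combination g 0 1 * hy - y 0 1 * hg

theorem exists_map_fst_eq_and_map_snd_eq {n : Type*} [Fintype n] [DecidableEq n]
    {T : Type*} [CommRing T] (a : SpecialLinearGroup n S) (b : SpecialLinearGroup n T) :
    ∃ w : SpecialLinearGroup n (S × T),
      map (RingHom.fst S T) w = a ∧ map (RingHom.snd S T) w = b := by
  refine ⟨⟨of fun i j => (a i j, b i j), ?_⟩, by ext; rfl, by ext; rfl⟩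
  ext
  · exact (RingHom.map_det (RingHom.fst S T) _).trans a.det_coe
  · exact (RingHom.map_det (RingHom.snd S T) _).trans b.det_coe

theorem map_quotientMk_surjective {R : Type*} [CommRing R] [IsDedekindDomain R] (J : Ideal R) :
    Function.Surjective (map (Ideal.Quotient.mk J) : SL(2, R) →* SL(2, R ⧸ J)) := by
  intro y
  obtain ⟨c, d, hc, hd, hcd⟩ := Ideal.Quotient.exists_isCoprime_mk_eq (isCoprime_row y 1)
  obtain ⟨g, hg₀, hg₁⟩ := hcd.exists_SL2_row 1
  obtain ⟨s, rfl⟩ :=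
    exists_eq_upperUnitriangular_mul (y := y) (g := map (Ideal.Quotient.mk J) g)
    (by simp [map_apply_coe, hg₀, hc]) (by simp [map_apply_coe, hg₁, hd])
  obtain ⟨s, rfl⟩ := Ideal.Quotient.mk_surjective s
  exact ⟨upperUnitriangular s * g, by simp⟩

theorem exists_map_mk_eq_and_map_mk_eq {R : Type*} [CommRing R] [IsDedekindDomain R]
    {I J : Ideal R} (h : IsCoprime I J) (a : SL(2, R ⧸ I)) (b : SL(2, R ⧸ J)) :
    ∃ x : SL(2, R), map (Ideal.Quotient.mk I) x = a ∧ map (Ideal.Quotient.mk J) x = b := by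
  set e := Ideal.quotientMulEquivQuotientProd I J h with he
  obtain ⟨w, rfl, rfl⟩ := exists_map_fst_eq_and_map_snd_eq a b
  obtain ⟨x, hx⟩ := map_quotientMk_surjective (I * J) (map (e.symm : _ →+* _) w)
  have hxw (i j : Fin 2) :
      (Ideal.Quotient.mk I (x i j), Ideal.Quotient.mk J (x i j)) = w i j := by
    simpa [he, map_apply_coe, Prod.ext_iff, Ideal.Quotient.factor_mk] using
      congrArg (fun z : SL(2, R ⧸ I * J) => e (z i j)) hx
  exact ⟨x, by ext i j; simp [map_apply_coe, ← hxw], by ext i j; simp [map_apply_coe, ← hxw]⟩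

end Matrix.SpecialLinearGroup

theorem stmt_0_general (F : Type*) [Field F] [NumberField F]
    (n : Ideal (𝓞 F)) (p : ℕ)
    (hcop : IsCoprime (Ideal.span {(p : 𝓞 F)}) n) :
    ∀ y : Matrix.SpecialLinearGroup (Fin 2) ((𝓞 F) ⧸ Ideal.span {(p : 𝓞 F)}),
      ∃ x : Matrix.SpecialLinearGroup (Fin 2) (𝓞 F),
        ((x : Matrix (Fin 2) (Fin 2) (𝓞 F)) 0 0 - 1 ∈ n) ∧
        ((x : Matrix (Fin 2) (Fin 2) (𝓞 F)) 1 1 - 1 ∈ n) ∧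
        ((x : Matrix (Fin 2) (Fin 2) (𝓞 F)) 1 0 ∈ n) ∧
        Matrix.SpecialLinearGroup.map (Ideal.Quotient.mk (Ideal.span {(p : 𝓞 F)})) x = y := by
  intro y
  obtain ⟨x, hxp, hxn⟩ := SpecialLinearGroup.exists_map_mk_eq_and_map_mk_eq hcop y 1
  have hx (i j : Fin 2) : x i j - (1 : Matrix (Fin 2) (Fin 2) (𝓞 F)) i j ∈ n := by
    rw [← Ideal.Quotient.mk_eq_mk_iff_sub_mem]
    simpa [SpecialLinearGroup.map_apply_coe, one_apply, apply_ite] using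
      congrArg (fun z : SL(2, _) => z i j) hxn
  exact ⟨x, by simpa using hx 0 0, by simpa using hx 1 1, by simpa using hx 1 0, hxp⟩

/-- Let `O` be the ring of integers of an imaginary quadratic field `F`,
`n` a nonzero ideal of `O`, and `p` a rational prime coprime to `n`.  Then the reduction map
from `Γ₁(n) = { M ∈ SL₂(O) : M ≡ (1 *; 0 1) mod n }` to `SL₂(O/pO)` is surjective. -/
theorem stmt_0 (F : Type*) [Field F] [NumberField F]
    (hdeg : Module.finrank ℚ F = 2)
    (himag : ∀ v : NumberField.InfinitePlace F, v.IsComplex)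
    (n : Ideal (𝓞 F)) (hn : n ≠ ⊥)
    (p : ℕ) (hp : p.Prime)
    (hcop : IsCoprime (Ideal.span {(p : 𝓞 F)}) n) :
    ∀ y : Matrix.SpecialLinearGroup (Fin 2) ((𝓞 F) ⧸ Ideal.span {(p : 𝓞 F)}),
      ∃ x : Matrix.SpecialLinearGroup (Fin 2) (𝓞 F),
        ((x : Matrix (Fin 2) (Fin 2) (𝓞 F)) 0 0 - 1 ∈ n) ∧
        ((x : Matrix (Fin 2) (Fin 2) (𝓞 F)) 1 1 - 1 ∈ n) ∧
        ((x : Matrix (Fin 2) (Fin 2) (𝓞 F)) 1 0 ∈ n) ∧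
        Matrix.SpecialLinearGroup.map (Ideal.Quotient.mk (Ideal.span {(p : 𝓞 F)})) x = y :=
  stmt_0_general F n p hcop
end

section
/- With k algebraically closed of characteristic p and G̃ = GL₂(F_{p²}): the class of X^{p(p-1)} Y^{p(p-1)} in U_{(p-1)²} / Ψ(V_{1,p-2}) is fixed by G̃ twisted by det^{-(p-1)τ}; equivalently, the map sending 1 to the class of X^{p(p-1)}Y^{p(p-1)} defines an injective G̃-homomorphism from the 1-dimensional module (det^{p-1})^τ into U_{(p-1)²}/Ψ(V_{1,p-2}). Concretely: for any g = (a b; c e) ∈ GL₂(F_{p²}), g · X^{p(p-1)}Y^{p(p-1)} ≡ det(g)^{p(p-1)} · X^{p(p-1)}Y^{p(p-1)} modulo Ψ(Sym¹(k²) ⊗ (Sym^{p-2}(k²))^τ), where computations take place in k[X,Y]/(X^{p²}-X, Y^{p²}-Y). -/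
/-! In characteristic `p`, `g · X^{p(p-1)} Y^{p(p-1)} = (aᵖXᵖ + cᵖYᵖ)^{p-1} (bᵖXᵖ + eᵖYᵖ)^{p-1}` is
a binary form of degree `2(p-1)` in `Xᵖ, Yᵖ`. Since `C(p-1, i) ≡ (-1)ⁱ mod p`, its middle
coefficient is `(aᵖeᵖ - bᵖcᵖ)^{p-1} = det(g)^{p(p-1)}`. Every other monomial has exponent at least
`p` in `Xᵖ` or in `Yᵖ`, and `X^{p²} = X` on `F_{p²}` rewrites it as `X · h(Xᵖ, Yᵖ)` or
`Y · h(Xᵖ, Yᵖ)` with `h` homogeneous of degree `p - 2`, an element of `Ψ(V_{1,p-2})`. -/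

open Finset MvPolynomial

section BinaryForm

variable {R : Type*}

theorem choose_pred_prime_eq_neg_one_pow [CommRing R] (p : ℕ) [hp : Fact p.Prime] [CharP R p]
    {i : ℕ} (hi : i ≤ p - 1) : ((p - 1).choose i : R) = (-1) ^ i := by
  induction i with
  | zero => simp
  | succ i ih =>
    have pascal : p.choose (i + 1) = (p - 1).choose i + (p - 1).choose (i + 1) := by
      conv_lhs => rw [← Nat.sub_add_cancel hp.out.one_le]
      exact Nat.choose_succ_succ _ _
    have vanish : (p.choose (i + 1) : R) = 0 :=
      (CharP.cast_eq_zero_iff R p _).mpr (hp.out.dvd_choose_self (by omega) (by omega))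
    rw [pascal, Nat.cast_add, ih (by omega)] at vanish
    rw [pow_succ]
    linear_combination vanish

/-- The coefficient of `u ^ (i + j) * w ^ (i' + j')` contributed by the term indexed by
`((i, i'), (j, j'))` when `(u A + w C) ^ n * (u B + w E) ^ n` is expanded. -/
def crossCoeff [CommSemiring R] (n : ℕ) (A B C E : R) (z : (ℕ × ℕ) × (ℕ × ℕ)) : R :=
  n.choose z.1.1 * n.choose z.2.1 * (A ^ z.1.1 * C ^ z.1.2 * B ^ z.2.1 * E ^ z.2.2)

theorem add_mul_pow_mul_add_mul_pow_eq_sum [CommSemiring R] (n : ℕ) (A B C E u w : R) :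
    (u * A + w * C) ^ n * (u * B + w * E) ^ n =
      ∑ z ∈ antidiagonal n ×ˢ antidiagonal n,
        crossCoeff n A B C E z * u ^ (z.1.1 + z.2.1) * w ^ (z.1.2 + z.2.2) := by
  rw [(Commute.all _ _).add_pow', (Commute.all _ _).add_pow', sum_mul_sum, ← sum_product']
  refine sum_congr rfl fun z _ => ?_
  simp only [crossCoeff, nsmul_eq_mul, mul_pow, pow_add]
  ring

theorem sum_crossCoeff_diag [CommRing R] (p : ℕ) [Fact p.Prime] [CharP R p] (A B C E : R) :
    ∑ z ∈ antidiagonal (p - 1) ×ˢ antidiagonal (p - 1) with z.1.1 + z.2.1 = p - 1,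
      crossCoeff (p - 1) A B C E z = (A * E - B * C) ^ (p - 1) := by
  rw [sub_eq_add_neg, (Commute.all _ _).add_pow']
  refine sum_nbij' (fun z => (z.1.1, z.2.1)) (fun ij => ((ij.1, ij.2), (ij.2, ij.1)))
    ?_ ?_ ?_ ?_ ?_
  · intro z hz
    simp only [mem_filter, mem_product, HasAntidiagonal.mem_antidiagonal] at hz ⊢
    omega
  · intro ij hij
    simp only [mem_filter, mem_product, HasAntidiagonal.mem_antidiagonal] at hij ⊢
    omega
  · intro z hz
    simp only [mem_filter, mem_product, HasAntidiagonal.mem_antidiagonal] at hz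
    ext <;> simp <;> omega
  · intro ij _
    rfl
  · intro z hz
    simp only [mem_filter, mem_product, HasAntidiagonal.mem_antidiagonal] at hz
    have hi' : z.1.2 = z.2.1 := by omega
    have hj' : z.2.2 = z.1.1 := by omega
    rw [crossCoeff, hi', hj', choose_pred_prime_eq_neg_one_pow p (R := R) (i := z.2.1) (by omega),
      nsmul_eq_mul, neg_pow, mul_pow]
    ring

theorem exists_add_mul_pow_mul_add_mul_pow_eq [CommRing R] (p : ℕ) [Fact p.Prime] [CharP R p]
    (A B C E : R) : ∃ γ : ℕ → R, ∀ u w : R,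
      (u * A + w * C) ^ (p - 1) * (u * B + w * E) ^ (p - 1) =
        (A * E - B * C) ^ (p - 1) * (u * w) ^ (p - 1) +
          ∑ m ∈ (range (2 * (p - 1) + 1)).erase (p - 1),
            γ m * (u ^ m * w ^ (2 * (p - 1) - m)) := by
  set n := p - 1
  set S := antidiagonal n ×ˢ antidiagonal n
  refine ⟨fun m => ∑ z ∈ S with z.1.1 + z.2.1 = m, crossCoeff n A B C E z, fun u w => ?_⟩
  have hdeg : ∀ z ∈ S, z.1.2 + z.2.2 = 2 * n - (z.1.1 + z.2.1) := by
    intro z hz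
    simp only [S, mem_product, HasAntidiagonal.mem_antidiagonal] at hz
    omega
  have hmaps : ∀ z ∈ S, z.1.1 + z.2.1 ∈ range (2 * n + 1) := by
    intro z hz
    simp only [S, mem_product, HasAntidiagonal.mem_antidiagonal] at hz
    simp only [mem_range]
    omega
  rw [add_mul_pow_mul_add_mul_pow_eq_sum, ← sum_fiberwise_of_maps_to hmaps,
    ← add_sum_erase _ _ (mem_range.2 (by omega : n < 2 * n + 1))]
  congr 1
  · rw [← sum_crossCoeff_diag p A B C E, sum_mul]
    refine sum_congr rfl fun z hz => ?_
    obtain ⟨hzS, hz⟩ := mem_filter.1 hz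
    rw [hdeg z hzS, hz, mul_pow, mul_assoc, show 2 * n - (p - 1) = n by omega]
  · refine sum_congr rfl fun m _ => ?_
    rw [sum_mul]
    refine sum_congr rfl fun z hz => ?_
    obtain ⟨hzS, hz⟩ := mem_filter.1 hz
    rw [hdeg z hzS, hz, mul_assoc]

end BinaryForm

section PsiImage

variable {F k : Type*} [Field F] [Field k] (p : ℕ) (ι : F →+* k)

/-- `Ψ(V_{1,p-2})`, realized as functions on `F²`: spanned by the products `f(X, Y) g(X^p, Y^p)`
with `f` linear and `g` homogeneous of degree `p - 2`. -/
def psiSpan : Submodule k ((Fin 2 → F) → k) :=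
  Submodule.span k {h : (Fin 2 → F) → k |
    ∃ f g : MvPolynomial (Fin 2) k,
      f ∈ MvPolynomial.homogeneousSubmodule (Fin 2) k 1 ∧
      g ∈ MvPolynomial.homogeneousSubmodule (Fin 2) k (p - 2) ∧
      h = fun v => MvPolynomial.eval (fun i => ι (v i)) f *
        MvPolynomial.eval (fun i => ι (v i) ^ p) g}

theorem mul_frobenius_monomial_mem_psiSpan (i : Fin 2) {s t : ℕ} (hst : s + t = p - 2) :
    (fun v : Fin 2 → F => ι (v i) * ((ι (v 0) ^ p) ^ s * (ι (v 1) ^ p) ^ t)) ∈ psiSpan p ι := by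
  refine Submodule.subset_span ⟨X i, X 0 ^ s * X 1 ^ t, ?_, ?_, ?_⟩
  · exact (mem_homogeneousSubmodule _ _).2 (isHomogeneous_X k i)
  · refine (mem_homogeneousSubmodule _ _).2 ?_
    simpa [hst] using ((isHomogeneous_X k (0 : Fin 2)).pow s).mul ((isHomogeneous_X k 1).pow t)
  · simp

theorem frobenius_sq_eq [Fintype F] (hcard : Fintype.card F = p ^ 2) (x : F) :
    (ι x ^ p) ^ p = ι x := by
  rw [← pow_mul, ← sq, ← hcard, ← map_pow, FiniteField.pow_card]

/-- Off the middle degree one of the exponents is at least `p`, and `(xᵖ)ᵖ = x` on `F` peels a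
linear factor off that monomial. -/
theorem frobenius_monomial_mem_psiSpan [Fintype F] (hcard : Fintype.card F = p ^ 2) {m : ℕ}
    (hm : m ∈ (range (2 * (p - 1) + 1)).erase (p - 1)) :
    (fun v : Fin 2 → F => (ι (v 0) ^ p) ^ m * (ι (v 1) ^ p) ^ (2 * (p - 1) - m)) ∈
      psiSpan p ι := by
  obtain ⟨hmn, hm⟩ := mem_erase.1 hm
  rw [mem_range] at hm
  rcases lt_or_gt_of_ne hmn with hlt | hgt
  · convert mul_frobenius_monomial_mem_psiSpan p ι 1 (s := m) (t := p - 2 - m) (by omega)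
      using 2 with v
    rw [show 2 * (p - 1) - m = p + (p - 2 - m) by omega, pow_add, frobenius_sq_eq p ι hcard]
    ring
  · obtain ⟨s, rfl⟩ : ∃ s, m = p + s := ⟨m - p, by omega⟩
    convert mul_frobenius_monomial_mem_psiSpan p ι 0 (s := s) (t := 2 * (p - 1) - (p + s))
      (by omega) using 2 with v
    rw [pow_add, frobenius_sq_eq p ι hcard]
    ring

end PsiImage

theorem stmt_10_general (p : ℕ) [Fact p.Prime]
    (F k : Type*) [Field F] [Fintype F] [Field k] [CharP k p]
    (hcard : Fintype.card F = p ^ 2) (ι : F →+* k)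
    (PsiIm : Submodule k ((Fin 2 → F) → k))
    (hPsiIm : PsiIm = Submodule.span k {h : (Fin 2 → F) → k |
      ∃ f g : MvPolynomial (Fin 2) k,
        f ∈ MvPolynomial.homogeneousSubmodule (Fin 2) k 1 ∧
        g ∈ MvPolynomial.homogeneousSubmodule (Fin 2) k (p - 2) ∧
        h = fun v => MvPolynomial.eval (fun i => ι (v i)) f *
          MvPolynomial.eval (fun i => ι (v i) ^ p) g}) :
    ∀ g : Matrix.GeneralLinearGroup (Fin 2) F,
      ((fun v : Fin 2 → F =>
          ι (Matrix.vecMul v (g : Matrix (Fin 2) (Fin 2) F) 0) ^ (p * (p - 1)) *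
          ι (Matrix.vecMul v (g : Matrix (Fin 2) (Fin 2) F) 1) ^ (p * (p - 1))) -
        ι ((g : Matrix (Fin 2) (Fin 2) F).det) ^ (p * (p - 1)) •
          (fun v : Fin 2 → F => ι (v 0) ^ (p * (p - 1)) * ι (v 1) ^ (p * (p - 1))))
        ∈ PsiIm := by
  intro g
  set M : Matrix (Fin 2) (Fin 2) F := ↑g
  obtain ⟨γ, hγ⟩ := exists_add_mul_pow_mul_add_mul_pow_eq p
    (ι (M 0 0) ^ p) (ι (M 0 1) ^ p) (ι (M 1 0) ^ p) (ι (M 1 1) ^ p)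
  have expansion : (fun v : Fin 2 → F =>
        ι (Matrix.vecMul v M 0) ^ (p * (p - 1)) * ι (Matrix.vecMul v M 1) ^ (p * (p - 1))) -
      ι M.det ^ (p * (p - 1)) •
        (fun v : Fin 2 → F => ι (v 0) ^ (p * (p - 1)) * ι (v 1) ^ (p * (p - 1))) =
      ∑ m ∈ (range (2 * (p - 1) + 1)).erase (p - 1),
        γ m • fun v : Fin 2 → F => (ι (v 0) ^ p) ^ m * (ι (v 1) ^ p) ^ (2 * (p - 1) - m) := by
    funext v
    have hform := hγ (ι (v 0) ^ p) (ι (v 1) ^ p)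
    simp only [Pi.sub_apply, Pi.smul_apply, Finset.sum_apply, smul_eq_mul, Matrix.vecMul,
      dotProduct, Fin.sum_univ_two, Matrix.det_fin_two, pow_mul, map_add, map_mul, map_sub,
      add_pow_char, sub_pow_char, mul_pow] at hform ⊢
    linear_combination hform
  rw [hPsiIm, expansion]
  exact Submodule.sum_mem _ fun m hm =>
    Submodule.smul_mem _ _ (frobenius_monomial_mem_psiSpan p ι hcard hm)

/-- For any `g ∈ GL₂(F_{p²})`, acting on the monomial
`X^{p(p-1)} Y^{p(p-1)}` (realized as the function `v ↦ v₀^{p(p-1)} v₁^{p(p-1)}` on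
`F_{p²}²`) gives back `det(g)^{p(p-1)}` times the monomial, modulo the image
`Ψ(Sym¹(k²) ⊗ (Sym^{p-2}(k²))^τ)`; i.e. the class of `X^{p(p-1)}Y^{p(p-1)}` spans a copy of
the one-dimensional module `(det^{p-1})^τ` in `U_{(p-1)²}/Ψ(V_{1,p-2})`. -/
theorem stmt_10 (p : ℕ) [Fact p.Prime] (hp5 : 5 < p)
    (F k : Type*) [Field F] [Fintype F] [CharP F p] [Field k] [IsAlgClosed k] [CharP k p]
    (hcard : Fintype.card F = p ^ 2) (ι : F →+* k)
    (PsiIm : Submodule k ((Fin 2 → F) → k))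
    (hPsiIm : PsiIm = Submodule.span k {h : (Fin 2 → F) → k |
      ∃ f g : MvPolynomial (Fin 2) k,
        f ∈ MvPolynomial.homogeneousSubmodule (Fin 2) k 1 ∧
        g ∈ MvPolynomial.homogeneousSubmodule (Fin 2) k (p - 2) ∧
        h = fun v => MvPolynomial.eval (fun i => ι (v i)) f *
          MvPolynomial.eval (fun i => ι (v i) ^ p) g}) :
    ∀ g : Matrix.GeneralLinearGroup (Fin 2) F,
      ((fun v : Fin 2 → F =>
          ι (Matrix.vecMul v (g : Matrix (Fin 2) (Fin 2) F) 0) ^ (p * (p - 1)) *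
          ι (Matrix.vecMul v (g : Matrix (Fin 2) (Fin 2) F) 1) ^ (p * (p - 1))) -
        ι ((g : Matrix (Fin 2) (Fin 2) F).det) ^ (p * (p - 1)) •
          (fun v : Fin 2 → F => ι (v 0) ^ (p * (p - 1)) * ι (v 1) ^ (p * (p - 1))))
        ∈ PsiIm :=
  stmt_10_general p F k hcard ι PsiIm hPsiIm
end
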